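/- Let H be a finite dimensional Hilbert space, p an orthogonal projection, and ξ₁,…,ξₙ unit vectors with κ < 1/10, 2δ ≤ 1/n, ‖pξₖ‖ ≤ κ for all k, and |⟨(I−p)ξⱼ, ξₖ⟩| ≤ δ for distinct j,k. Setting φₖ = (I−p)ξₖ / √(1 − ‖pξₖ‖²), there exists an orthonormal basis ϑ₁,…,ϑₙ of span((I−p)ξ₁,…,(I−p)ξₙ) with max₁≤k≤n ‖φₖ − ϑₖ‖ ≤ 2δn. -/

import Mathlib

/-!
Löwdin's symmetric orthogonalization. The vectors `(I - p) ξₖ` have squared norm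
`1 - ‖p ξₖ‖² ≥ 99/100`, so their normalizations `φₖ` are unit vectors with pairwise inner
products at most `(100/99) δ`. For the synthesis map `T eₖ = φₖ` on `ℓ²(n)`, a matrix with entries
bounded by `d` has operator norm at most `n d`, so the Gram operator `G = T* T` satisfies
`‖G - 1‖ ≤ (100/99) δ n < 1`. Then `ϑₖ = T G^{-1/2} eₖ` is orthonormal, spans the range of `T`, and
`‖φₖ - ϑₖ‖ = ‖(G^{1/2} - 1) eₖ‖ ≤ ‖G - 1‖`, because `|√t - 1| ≤ |t - 1|`.
-/

open scoped InnerProductSpace Pointwise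

theorem spectrum_subset_Icc_of_norm_sub_one_le {A : Type*} [NormedRing A] [NormedAlgebra ℝ A]
    [CompleteSpace A] [NormOneClass A] {a : A} {ε : ℝ} (h : ‖a - 1‖ ≤ ε) :
    spectrum ℝ a ⊆ Set.Icc (1 - ε) (1 + ε) := by
  intro t ht
  have hmem : t - 1 ∈ spectrum ℝ a - {1} := Set.sub_mem_sub ht (Set.mem_singleton 1)
  rw [spectrum.sub_singleton_eq, map_one] at hmem
  have := (spectrum.norm_le_norm_of_mem hmem).trans h
  rw [Real.norm_eq_abs, abs_le] at this
  constructor <;> linarith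

theorem IsSelfAdjoint.exists_sqrt_near_one {A : Type*} [CStarAlgebra A] {a : A}
    (ha : IsSelfAdjoint a) {ε : ℝ} (hε : ‖a - 1‖ ≤ ε) (hε1 : ε < 1) :
    ∃ r : A, IsSelfAdjoint r ∧ r * r = a ∧ IsUnit r ∧ ‖r - 1‖ ≤ ε := by
  have hε0 : 0 ≤ ε := (norm_nonneg _).trans hε
  obtain _ | _ := subsingleton_or_nontrivial A
  · exact ⟨1, .one _, Subsingleton.elim _ _, isUnit_one, by simpa using hε0⟩
  have hspec := spectrum_subset_Icc_of_norm_sub_one_le hε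
  have hpos : ∀ t ∈ spectrum ℝ a, 0 < t := fun t ht => by linarith [(hspec ht).1]
  refine ⟨cfc Real.sqrt a, cfc_predicate _ _, ?_, ?_, ?_⟩
  · rw [← cfc_mul ..]
    conv_rhs => rw [← cfc_id' ℝ a]
    exact cfc_congr fun t ht => Real.mul_self_sqrt (hpos t ht).le
  · exact isUnit_cfc_iff _ _ |>.mpr fun t ht => (Real.sqrt_pos.mpr (hpos t ht)).ne'
  · rw [← cfc_const_one ℝ a, ← cfc_sub ..]
    refine norm_cfc_le hε0 fun t ht => ?_
    obtain ⟨h1, h2⟩ := hspec ht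
    have hsq := Real.sq_sqrt (hpos t ht).le
    rw [Real.norm_eq_abs, abs_le]
    constructor <;> nlinarith [Real.sqrt_nonneg t]

open ContinuousLinearMap in
theorem ContinuousLinearMap.exists_isUnit_inner_map_map_eq_and_norm_sub_le {E F : Type*}
    [NormedAddCommGroup E] [InnerProductSpace ℂ E] [CompleteSpace E]
    [NormedAddCommGroup F] [InnerProductSpace ℂ F] [CompleteSpace F] (T : E →L[ℂ] F) {ε : ℝ}
    (hε : ‖adjoint T ∘L T - 1‖ ≤ ε) (hε1 : ε < 1) :
    ∃ S : E →L[ℂ] E, IsUnit S ∧ (∀ x y, ⟪T (S x), T (S y)⟫_ℂ = ⟪x, y⟫_ℂ) ∧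
      ∀ x, ‖T x - T (S x)‖ ≤ ε * ‖x‖ := by
  have hG : IsSelfAdjoint (adjoint T ∘L T) := by
    rw [IsSelfAdjoint, star_eq_adjoint, adjoint_comp, adjoint_adjoint]
  obtain ⟨r, hr, hrr, hr_unit, hr1⟩ := hG.exists_sqrt_near_one hε hε1
  have hinner : ∀ x y, ⟪T x, T y⟫_ℂ = ⟪r x, r y⟫_ℂ := fun x y => by
    rw [← adjoint_inner_right, ← comp_apply, ← hrr, mul_apply_eq_comp]
    exact (hr.isSymmetric x (r y)).symm
  have hnorm : ∀ x, ‖T x‖ = ‖r x‖ := fun x => by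
    rw [norm_eq_sqrt_re_inner (𝕜 := ℂ), hinner, ← norm_eq_sqrt_re_inner]
  set S : E →L[ℂ] E := ↑hr_unit.unit⁻¹
  have hrS : ∀ x, r (S x) = x := fun x => by
    rw [← mul_apply_eq_comp, hr_unit.mul_val_inv, one_apply_eq_self]
  refine ⟨S, Units.isUnit _, fun x y => by rw [hinner, hrS, hrS], fun x => ?_⟩
  calc ‖T x - T (S x)‖ = ‖(r - 1) x‖ := by
        rw [← map_sub, hnorm, map_sub, hrS, sub_apply, one_apply_eq_self]
    _ ≤ ‖r - 1‖ * ‖x‖ := le_opNorm _ _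
    _ ≤ ε * ‖x‖ := by gcongr

open ContinuousLinearMap in
theorem OrthonormalBasis.opNorm_le_card_mul_of_norm_inner_le {𝕜 ι E : Type*} [RCLike 𝕜]
    [Fintype ι] [NormedAddCommGroup E] [InnerProductSpace 𝕜 E] [CompleteSpace E]
    (b : OrthonormalBasis ι 𝕜 E) (A : E →L[𝕜] E) {d : ℝ} (hd : 0 ≤ d)
    (h : ∀ i j, ‖⟪b i, A (b j)⟫_𝕜‖ ≤ d) : ‖A‖ ≤ Fintype.card ι * d := by
  have hbound {x : E} {C : ℝ} (hC : 0 ≤ C) (hx : ∀ i, ‖⟪b i, x⟫_𝕜‖ ≤ C) :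
      ‖x‖ ≤ √(Fintype.card ι) * C :=
    (b.norm_le_card_mul_iSup_norm_inner x).trans (by gcongr; exact Real.iSup_le hx hC)
  have hrow : ∀ i, ‖adjoint A (b i)‖ ≤ √(Fintype.card ι) * d := fun i => hbound hd fun j => by
    rw [adjoint_inner_right, ← inner_conj_symm, RCLike.norm_conj]
    exact h i j
  refine opNorm_le_bound _ (by positivity) fun x => ?_
  calc ‖A x‖ ≤ √(Fintype.card ι) * (√(Fintype.card ι) * d * ‖x‖) := by
        refine hbound (by positivity) fun i => ?_
        rw [← adjoint_inner_left]
        exact (norm_inner_le_norm _ _).trans (by gcongr; exact hrow i)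
    _ = Fintype.card ι * d * ‖x‖ := by
        rw [← mul_assoc, ← mul_assoc, Real.mul_self_sqrt (Nat.cast_nonneg _)]

open ContinuousLinearMap in
theorem exists_orthonormal_span_eq_norm_sub_le_of_norm_inner_le {ι F : Type*} [Fintype ι]
    [NormedAddCommGroup F] [InnerProductSpace ℂ F] [CompleteSpace F]
    (φ : ι → F) (hφ : ∀ i, ‖φ i‖ = 1) {d : ℝ} (hd : 0 ≤ d)
    (hoff : ∀ i j, i ≠ j → ‖⟪φ i, φ j⟫_ℂ‖ ≤ d) (hd1 : Fintype.card ι * d < 1) :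
    ∃ ϑ : ι → F, Orthonormal ℂ ϑ ∧ Submodule.span ℂ (Set.range ϑ) = Submodule.span ℂ (Set.range φ) ∧
      ∀ i, ‖φ i - ϑ i‖ ≤ Fintype.card ι * d := by
  classical
  let b := EuclideanSpace.basisFun ι ℂ
  let T : EuclideanSpace ℂ ι →L[ℂ] F := LinearMap.toContinuousLinearMap (b.toBasis.constr ℂ φ)
  have hTb (i : ι) : T (b i) = φ i := by
    simpa only [T, LinearMap.coe_toContinuousLinearMap', b.coe_toBasis] using
      b.toBasis.constr_basis ℂ φ i
  have hgram : ‖adjoint T ∘L T - 1‖ ≤ Fintype.card ι * d := by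
    refine b.opNorm_le_card_mul_of_norm_inner_le _ hd fun i j => ?_
    rw [sub_apply, one_apply_eq_self, comp_apply, inner_sub_right, adjoint_inner_right, hTb, hTb,
      orthonormal_iff_ite.mp b.orthonormal]
    rcases eq_or_ne i j with rfl | hij
    · simp [inner_self_eq_norm_sq_to_K, hφ, hd]
    · simpa [hij] using hoff i j hij
  obtain ⟨S, hS, hSinner, hSnear⟩ :=
    exists_isUnit_inner_map_map_eq_and_norm_sub_le T hgram hd1
  refine ⟨fun i => T (S (b i)), ?_, ?_, fun i => ?_⟩
  · simpa only [orthonormal_iff_ite, hSinner] using b.orthonormal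
  · have hS_top : LinearMap.range (S : EuclideanSpace ℂ ι →ₗ[ℂ] EuclideanSpace ℂ ι) = ⊤ :=
      LinearMap.range_eq_top.mpr (isUnit_iff_bijective.mp hS).2
    let U : EuclideanSpace ℂ ι →ₗ[ℂ] F := (T : EuclideanSpace ℂ ι →ₗ[ℂ] F) ∘ₗ S
    calc Submodule.span ℂ (Set.range fun i => T (S (b i)))
        = LinearMap.range (b.toBasis.constr ℂ fun i => U (b.toBasis i)) := by
          rw [Module.Basis.constr_range, b.coe_toBasis]; rfl
      _ = LinearMap.range (b.toBasis.constr ℂ φ) := by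
          rw [Module.Basis.constr_self, LinearMap.range_comp_of_range_eq_top _ hS_top]; rfl
      _ = Submodule.span ℂ (Set.range φ) := b.toBasis.constr_range ℂ
  · simpa [← hTb i, b.orthonormal.1 i] using hSnear (b i)

theorem Submodule.span_range_smul_of_ne_zero {ι K V : Type*} [DivisionRing K] [AddCommGroup V]
    [Module K V] {c : ι → K} (hc : ∀ i, c i ≠ 0) (v : ι → V) :
    span K (Set.range fun i => c i • v i) = span K (Set.range v) := by
  refine le_antisymm (span_le.mpr ?_) (span_le.mpr ?_) <;> rintro _ ⟨i, rfl⟩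
  · exact smul_mem _ _ (subset_span ⟨i, rfl⟩)
  · rw [← inv_smul_smul₀ (hc i) (v i)]
    exact smul_mem _ _ (subset_span ⟨i, rfl⟩)

theorem norm_inner_inv_norm_smul_le {𝕜 E : Type*} [RCLike 𝕜] [NormedAddCommGroup E]
    [InnerProductSpace 𝕜 E] {x y : E} {c δ : ℝ} (hc : 0 < c) (hx : c ≤ ‖x‖ ^ 2)
    (hy : c ≤ ‖y‖ ^ 2) (hxy : ‖⟪x, y⟫_𝕜‖ ≤ δ) :
    ‖⟪(‖x‖⁻¹ : 𝕜) • x, (‖y‖⁻¹ : 𝕜) • y⟫_𝕜‖ ≤ δ / c := by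
  have hxy_norm : c ≤ ‖x‖ * ‖y‖ := by
    have := mul_le_mul hx hy hc.le (sq_nonneg _)
    rw [← sq, ← mul_pow] at this
    exact le_of_sq_le_sq (by simpa using this) (by positivity)
  rw [inner_smul_left, inner_smul_right, norm_mul, norm_mul, RCLike.norm_conj, norm_inv, norm_inv,
    RCLike.norm_ofReal, RCLike.norm_ofReal, abs_norm, abs_norm, ← mul_assoc, ← mul_inv,
    inv_mul_eq_div, div_le_div_iff₀ (hc.trans_le hxy_norm) hc]
  nlinarith [norm_nonneg (⟪x, y⟫_𝕜), (norm_nonneg (⟪x, y⟫_𝕜)).trans hxy]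

theorem exists_orthonormal_span_eq_norm_inv_norm_smul_sub_le {ι F : Type*} [Fintype ι]
    [NormedAddCommGroup F] [InnerProductSpace ℂ F] [CompleteSpace F]
    (ψ : ι → F) {c δ : ℝ} (hc : 0 < c) (hδ : 0 ≤ δ) (hψ : ∀ i, c ≤ ‖ψ i‖ ^ 2)
    (hoff : ∀ i j, i ≠ j → ‖⟪ψ i, ψ j⟫_ℂ‖ ≤ δ) (h1 : Fintype.card ι * (δ / c) < 1) :
    ∃ ϑ : ι → F, Orthonormal ℂ ϑ ∧ Submodule.span ℂ (Set.range ϑ) = Submodule.span ℂ (Set.range ψ) ∧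
      ∀ i, ‖(‖ψ i‖⁻¹ : ℂ) • ψ i - ϑ i‖ ≤ Fintype.card ι * (δ / c) := by
  have hψ0 (i : ι) : ψ i ≠ 0 := fun h => by
    have := hψ i
    rw [h, norm_zero] at this
    linarith
  obtain ⟨ϑ, hϑ, hspan, hnear⟩ :=
    exists_orthonormal_span_eq_norm_sub_le_of_norm_inner_le (fun i => (‖ψ i‖⁻¹ : ℂ) • ψ i)
      (fun i => norm_smul_inv_norm (hψ0 i)) (by positivity)
      (fun i j hij => norm_inner_inv_norm_smul_le hc (hψ i) (hψ j) (hoff i j hij)) h1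
  refine ⟨ϑ, hϑ, ?_, hnear⟩
  rw [hspan, Submodule.span_range_smul_of_ne_zero]
  exact fun i => inv_ne_zero (by exact_mod_cast norm_ne_zero_iff.mpr (hψ0 i))

namespace LinearMap.IsSymmetricProjection

variable {𝕜 E : Type*} [RCLike 𝕜] [NormedAddCommGroup E] [InnerProductSpace 𝕜 E]
  {p : E →ₗ[𝕜] E}

theorem inner_sub_apply_map_eq_zero (hp : p.IsSymmetricProjection) (x y : E) :
    ⟪x - p x, p y⟫_𝕜 = 0 := by
  rw [← hp.isSymmetric, map_sub, ← Module.End.mul_apply, hp.isIdempotentElem.eq, sub_self,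
    inner_zero_left]

theorem inner_sub_apply_sub_apply (hp : p.IsSymmetricProjection) (x y : E) :
    ⟪x - p x, y - p y⟫_𝕜 = ⟪x - p x, y⟫_𝕜 := by
  rw [inner_sub_right, hp.inner_sub_apply_map_eq_zero, sub_zero]

theorem norm_sub_apply_sq (hp : p.IsSymmetricProjection) (x : E) :
    ‖x - p x‖ ^ 2 = ‖x‖ ^ 2 - ‖p x‖ ^ 2 := by
  have := norm_add_sq_eq_norm_sq_add_norm_sq_of_inner_eq_zero _ _
    (hp.inner_sub_apply_map_eq_zero x x)
  rw [sub_add_cancel] at this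
  linarith

end LinearMap.IsSymmetricProjection

theorem stmt3_general {H : Type*} [NormedAddCommGroup H] [InnerProductSpace ℂ H] [FiniteDimensional ℂ H]
    (n : ℕ) (p : H →ₗ[ℂ] H) (hp : p ∘ₗ p = p) (hpa : LinearMap.adjoint p = p)
    (ξ : Fin n → H) (hunit : ∀ k, ‖ξ k‖ = 1)
    (δ κ : ℝ) (hδ : 0 < δ) (hκ' : κ < 1/10) (hδn : 2 * δ ≤ 1 / n)
    (hpξ : ∀ k, ‖p (ξ k)‖ ≤ κ)
    (hip : ∀ j k, j ≠ k → ‖(@inner ℂ H _ (ξ j - p (ξ j)) (ξ k))‖ ≤ δ)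
    (φ : Fin n → H)
    (hφ : ∀ k, φ k = ((Real.sqrt (1 - ‖p (ξ k)‖ ^ 2) : ℂ))⁻¹ • (ξ k - p (ξ k))) :
    ∃ ϑ : Fin n → H, Orthonormal ℂ ϑ ∧
      Submodule.span ℂ (Set.range ϑ) = Submodule.span ℂ (Set.range fun k => ξ k - p (ξ k)) ∧
      ∀ k, ‖φ k - ϑ k‖ ≤ 2 * δ * n := by
  have hproj : p.IsSymmetricProjection :=
    ⟨hp, (LinearMap.isSymmetric_iff_isSelfAdjoint p).mpr hpa⟩
  have hn : 0 < n := Nat.pos_of_ne_zero fun h => by simp [h] at hδn; linarith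
  have h2δn : 2 * δ * n ≤ 1 := by rwa [le_div_iff₀ (by positivity)] at hδn
  have hψ_sq (k : Fin n) : ‖ξ k - p (ξ k)‖ ^ 2 = 1 - ‖p (ξ k)‖ ^ 2 := by
    rw [hproj.norm_sub_apply_sq, hunit, one_pow]
  have hψ_lb (k : Fin n) : 99 / 100 ≤ ‖ξ k - p (ξ k)‖ ^ 2 := by
    nlinarith [hψ_sq k, hpξ k, norm_nonneg (p (ξ k))]
  obtain ⟨ϑ, hϑ, hspan, hnear⟩ :=
    exists_orthonormal_span_eq_norm_inv_norm_smul_sub_le (fun k => ξ k - p (ξ k)) (by norm_num)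
      hδ.le hψ_lb (fun j k hjk => by
        simpa only [hproj.inner_sub_apply_sub_apply] using hip j k hjk)
      (by rw [Fintype.card_fin]; linarith)
  refine ⟨ϑ, hϑ, hspan, fun k => ?_⟩
  rw [hφ, ← hψ_sq, Real.sqrt_sq (norm_nonneg _)]
  exact (hnear k).trans (by rw [Fintype.card_fin]; nlinarith [mul_pos hδ (Nat.cast_pos.mpr hn)])

/-- the normalized vectors φₖ = (I-p)ξₖ/√(1-‖pξₖ‖²) are close to an
orthonormal basis of the span of the (I-p)ξₖ. -/
theorem stmt3 {H : Type*} [NormedAddCommGroup H] [InnerProductSpace ℂ H] [FiniteDimensional ℂ H]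
    (n : ℕ) (p : H →ₗ[ℂ] H) (hp : p ∘ₗ p = p) (hpa : LinearMap.adjoint p = p)
    (ξ : Fin n → H) (hunit : ∀ k, ‖ξ k‖ = 1)
    (δ κ : ℝ) (hδ : 0 < δ) (hκ : 0 < κ) (hκ' : κ < 1/10) (hδn : 2 * δ ≤ 1 / n)
    (hpξ : ∀ k, ‖p (ξ k)‖ ≤ κ)
    (hip : ∀ j k, j ≠ k → ‖(@inner ℂ H _ (ξ j - p (ξ j)) (ξ k))‖ ≤ δ)
    (φ : Fin n → H)
    (hφ : ∀ k, φ k = ((Real.sqrt (1 - ‖p (ξ k)‖ ^ 2) : ℂ))⁻¹ • (ξ k - p (ξ k))) :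
    ∃ ϑ : Fin n → H, Orthonormal ℂ ϑ ∧
      Submodule.span ℂ (Set.range ϑ) = Submodule.span ℂ (Set.range fun k => ξ k - p (ξ k)) ∧
      ∀ k, ‖φ k - ϑ k‖ ≤ 2 * δ * n :=
  stmt3_general n p hp hpa ξ hunit δ κ hδ hκ' hδn hpξ hip φ hφ
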